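/- arXiv:1411.4976 — 9 statements merged into one kernel-verified Lean document; each statement's English description precedes it below -/
import Mathlib

section
/- Let (H₁, Γ, s₁) and (H₂, Γ, s₂) be two cut-and-project schemes on ℝ^d with the same structure group Γ. Suppose θ : H₁ → H₂ is a continuous group homomorphism such that s₂ = θ ∘ s₁ on Γ. Then θ is surjective and is an open map. -/
open scoped Pointwise

noncomputable section

/-- Euclidean space `ℝ^d`. -/
abbrev Euc (d : ℕ) := EuclideanSpace ℝ (Fin d)

/-- The graph `{(s(γ), γ) : γ ∈ Γ}` of the `*`-map of a cut-and-project
scheme, as a subgroup of `H × ℝ^d`. -/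
def graphHom {d : ℕ} {H : Type*} [AddCommGroup H]
    {Γ : AddSubgroup (Euc d)} (s : Γ →+ H) : AddSubgroup (H × Euc d) :=
  (s.prod Γ.subtype).range

/-- `(H, Γ, s)` is a cut-and-project scheme on `ℝ^d`: `s : Γ →+ H` has dense
range, and its graph is a lattice (discrete and cocompact subgroup) of
`H × ℝ^d`.  (The ambient hypotheses that `H` is a locally compact, σ-compact,
Hausdorff abelian topological group and `Γ` countable are carried as
typeclass assumptions.) -/
structure IsCPS (d : ℕ) (H : Type*) [AddCommGroup H] [TopologicalSpace H]
    (Γ : AddSubgroup (Euc d)) (s : Γ →+ H) : Prop where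
  denseRange : DenseRange s
  discreteGraph : DiscreteTopology (graphHom s)
  cocompactGraph : CompactSpace ((H × Euc d) ⧸ graphHom s)

/-!
The map `Θ = θ × id` sends the lattice `L₁ = graphHom s₁` into `L₂ = graphHom s₂`, so it
descends to a continuous map of the compact quotient `(H₁ × ℝ^d) ⧸ L₁` into the Hausdorff
quotient `(H₂ × ℝ^d) ⧸ L₂` (`L₂` is discrete, hence closed). Its range is dense, because `θ`
has dense range (it contains `s₂(Γ) = θ(s₁(Γ))`), and compact, hence everything. Thus
`H₂ × ℝ^d = Θ(H₁ × ℝ^d) + L₂`, and comparing first coordinates at a point `(h, 0)` gives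
`h ∈ θ(H₁) + s₂(Γ) = θ(H₁)`. Openness is then the open mapping theorem for σ-compact locally
compact groups.
-/

open Function

theorem DenseRange.surjective_of_compactSpace {X Y : Type*} [TopologicalSpace X] [CompactSpace X]
    [TopologicalSpace Y] [T2Space Y] {f : X → Y} (hd : DenseRange f) (hf : Continuous f) :
    Surjective f :=
  Set.range_eq_univ.mp <| by rw [← (isCompact_range hf).isClosed.closure_eq, hd.closure_range]

@[to_additive]
theorem QuotientGroup.map_surjective_of_denseRange {G G' : Type*} [Group G] [TopologicalSpace G]
    [Group G'] [TopologicalSpace G'] [IsTopologicalGroup G'] {N : Subgroup G} [N.Normal]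
    {N' : Subgroup G'} [N'.Normal] [IsClosed (N' : Set G')] [CompactSpace (G ⧸ N)]
    {f : G →* G'} (hf : Continuous f) (hd : DenseRange f) (h : N ≤ N'.comap f) :
    Surjective (QuotientGroup.map N N' f h) := by
  have hmk_dense : DenseRange ((↑) ∘ f : G → G' ⧸ N') :=
    mk_surjective.denseRange.comp hd continuous_mk
  refine DenseRange.surjective_of_compactSpace ?_ ?_
  · exact hmk_dense.mono <| by rintro _ ⟨x, rfl⟩; exact ⟨x, rfl⟩
  · exact (isQuotientMap_mk N).continuous_iff.2 (continuous_mk.comp hf)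

section graphHom

variable {d : ℕ} {H₁ H₂ : Type*} [AddCommGroup H₁] [AddCommGroup H₂] {Γ : AddSubgroup (Euc d)}
  {s₁ : Γ →+ H₁} {s₂ : Γ →+ H₂} {θ : H₁ →+ H₂}

theorem graphHom_le_comap_prodMap (hcomm : ∀ γ : Γ, s₂ γ = θ (s₁ γ)) :
    graphHom s₁ ≤ (graphHom s₂).comap (θ.prodMap (AddMonoidHom.id _)) := by
  rintro _ ⟨γ, rfl⟩
  exact ⟨γ, by simp [hcomm γ]⟩

theorem surjective_of_map_graphHom_surjective (hcomm : ∀ γ : Γ, s₂ γ = θ (s₁ γ))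
    (hsurj : Surjective (QuotientAddGroup.map _ _ _ (graphHom_le_comap_prodMap hcomm))) :
    Surjective θ := by
  intro h
  obtain ⟨x, hx⟩ := hsurj ((h, 0) : H₂ × Euc d)
  obtain ⟨⟨a, u⟩, rfl⟩ := QuotientAddGroup.mk_surjective x
  obtain ⟨γ, hγ⟩ : (h, (0 : Euc d)) - (θ a, u) ∈ graphHom s₂ := by
    rwa [← QuotientAddGroup.eq_iff_sub_mem, eq_comm]
  have hfst : s₂ γ = h - θ a := congrArg Prod.fst hγ
  refine ⟨a + s₁ γ, ?_⟩
  rw [map_add, ← hcomm γ, hfst, add_sub_cancel]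

end graphHom

theorem cps_morphism_surjective_and_open_general (d : ℕ) (H₁ H₂ : Type*)
    [AddCommGroup H₁] [TopologicalSpace H₁] [IsTopologicalAddGroup H₁]
    [SigmaCompactSpace H₁]
    [AddCommGroup H₂] [TopologicalSpace H₂] [IsTopologicalAddGroup H₂]
    [LocallyCompactSpace H₂] [T2Space H₂]
    (Γ : AddSubgroup (Euc d))
    (s₁ : Γ →+ H₁) (s₂ : Γ →+ H₂)
    (h₁ : IsCPS d H₁ Γ s₁) (h₂ : IsCPS d H₂ Γ s₂)
    (θ : H₁ →+ H₂) (hθ : Continuous θ) (hcomm : ∀ γ : Γ, s₂ γ = θ (s₁ γ)) :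
    Function.Surjective θ ∧ IsOpenMap θ := by
  have := h₁.cocompactGraph
  have := h₂.discreteGraph
  have hθ_dense : DenseRange θ := by
    have hs₂ : (s₂ : Γ → H₂) = θ ∘ s₁ := funext hcomm
    exact h₂.denseRange.mono (hs₂ ▸ Set.range_comp_subset_range s₁ θ)
  have hsurj : Surjective θ := surjective_of_map_graphHom_surjective hcomm <|
    QuotientAddGroup.map_surjective_of_denseRange (hθ.prodMap continuous_id)
      (hθ_dense.prodMap denseRange_id) _
  exact ⟨hsurj, θ.isOpenMap_of_sigmaCompact hsurj hθ⟩

/-- A continuous group morphism between the internal spaces of two CPS with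
the same structure group, intertwining the `*`-maps, is onto and open. -/
theorem cps_morphism_surjective_and_open (d : ℕ) (H₁ H₂ : Type*)
    [AddCommGroup H₁] [TopologicalSpace H₁] [IsTopologicalAddGroup H₁]
    [LocallyCompactSpace H₁] [SigmaCompactSpace H₁] [T2Space H₁]
    [AddCommGroup H₂] [TopologicalSpace H₂] [IsTopologicalAddGroup H₂]
    [LocallyCompactSpace H₂] [SigmaCompactSpace H₂] [T2Space H₂]
    (Γ : AddSubgroup (Euc d)) [Countable Γ]
    (s₁ : Γ →+ H₁) (s₂ : Γ →+ H₂)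
    (h₁ : IsCPS d H₁ Γ s₁) (h₂ : IsCPS d H₂ Γ s₂)
    (θ : H₁ →+ H₂) (hθ : Continuous θ) (hcomm : ∀ γ : Γ, s₂ γ = θ (s₁ γ)) :
    Function.Surjective θ ∧ IsOpenMap θ :=
  cps_morphism_surjective_and_open_general d H₁ H₂ Γ s₁ s₂ h₁ h₂ θ hθ hcomm
end
end

section
/- Let (H₁, Γ₁, s₁) and (H₂, Γ₂, s₂) be two cut-and-project schemes on ℝ^d with Γ₁ ⊆ Γ₂, and suppose θ : H₁ → H₂ is a continuous group homomorphism such that s₂(γ) = θ(s₁(γ)) for all γ ∈ Γ₁. Then θ is an open map and θ(H₁) is an open subgroup of H₂. -/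
/-! The map `θ × id` carries the lattice `L₁` of the first scheme into the lattice `L₂` of the
second, so it induces a continuous map from the compact quotient `(H₁ × ℝ^d) / L₁` to
`(H₂ × ℝ^d) / L₂`. Its image is compact, so `θ(H₁) × ℝ^d + L₂` is closed; the slice of this
subgroup over `0 ∈ ℝ^d` is a closed subgroup of `H₂` containing the dense set `s₂(Γ₂)`, whence
`H₂ = θ(H₁) + s₂(Γ₂)`. As `Γ₂` is countable and `θ(H₁)` is σ-compact, Baire's theorem makes
`θ(H₁)` open, and the open mapping theorem for σ-compact groups makes `θ` open onto it. -/

open scoped Pointwise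

noncomputable section

theorem AddSubgroup.countable_quotient_of_sup_range_eq_top {G Γ : Type*} [AddCommGroup G]
    [AddGroup Γ] [Countable Γ] {S : AddSubgroup G} {φ : Γ →+ G} (h : S ⊔ φ.range = ⊤) :
    Countable (G ⧸ S) := by
  refine Function.Surjective.countable (f := fun γ ↦ ((φ γ : G) : G ⧸ S)) fun q ↦ ?_
  obtain ⟨g, rfl⟩ := QuotientAddGroup.mk_surjective q
  obtain ⟨a, ha, _, ⟨γ, rfl⟩, rfl⟩ := AddSubgroup.mem_sup.1 (h.symm ▸ AddSubgroup.mem_top g)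
  exact ⟨γ, QuotientAddGroup.eq.2 (by simpa using ha)⟩

theorem AddSubgroup.isOpen_of_isSigmaCompact_of_countable_quotient {G : Type*} [AddCommGroup G]
    [TopologicalSpace G] [IsTopologicalAddGroup G] [BaireSpace G] [T2Space G]
    {S : AddSubgroup G} (hS : IsSigmaCompact (S : Set G)) [Countable (G ⧸ S)] :
    IsOpen (S : Set G) := by
  obtain ⟨K, hKc, hKS⟩ := hS
  have hclosed : ∀ i : (G ⧸ S) × ℕ, IsClosed (i.1.out +ᵥ K i.2) :=
    fun i ↦ ((hKc i.2).vadd i.1.out).isClosed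
  have hcover : ⋃ i : (G ⧸ S) × ℕ, i.1.out +ᵥ K i.2 = Set.univ := by
    refine Set.eq_univ_of_forall fun g ↦ ?_
    have hg : -(g : G ⧸ S).out + g ∈ S :=
      QuotientAddGroup.eq.1 (QuotientAddGroup.out_eq' (g : G ⧸ S))
    rw [← SetLike.mem_coe, ← hKS, Set.mem_iUnion] at hg
    obtain ⟨n, hn⟩ := hg
    exact Set.mem_iUnion.2 ⟨((g : G ⧸ S), n), ⟨_, hn, add_neg_cancel_left _ _⟩⟩
  have : Nonempty G := ⟨0⟩
  obtain ⟨⟨q, n⟩, x, hx⟩ := nonempty_interior_of_iUnion_of_closed hclosed hcover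
  rw [interior_vadd] at hx
  obtain ⟨y, hy, -⟩ := hx
  have hKS : K n ⊆ S := hKS ▸ Set.subset_iUnion K n
  exact S.isOpen_of_mem_nhds (mem_interior_iff_mem_nhds.1 (interior_mono hKS hy))

namespace AddMonoidHom

variable {G H : Type*} [AddCommGroup G] [TopologicalSpace G]
  [AddCommGroup H] [TopologicalSpace H] [IsTopologicalAddGroup H]

theorem isClosed_range_sup {f : G →+ H} (hf : Continuous f) {N₁ : AddSubgroup G}
    {N₂ : AddSubgroup H} [CompactSpace (G ⧸ N₁)] [IsClosed (N₂ : Set H)]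
    (hN : N₁ ≤ N₂.comap f) : IsClosed ((f.range ⊔ N₂ : AddSubgroup H) : Set H) := by
  set π := QuotientAddGroup.mk' N₂
  have hker : N₁ ≤ (π.comp f).ker := fun x hx ↦
    mem_ker.2 ((QuotientAddGroup.eq_zero_iff _).2 (hN hx))
  have hlift : Continuous (QuotientAddGroup.lift N₁ (π.comp f) hker) :=
    (QuotientAddGroup.isQuotientMap_mk N₁).continuous_iff.2 (continuous_quot_mk.comp hf)
  have hrange : ((π.comp f).range : Set (H ⧸ N₂)) =
      Set.range (QuotientAddGroup.lift N₁ (π.comp f) hker) := by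
    rw [coe_range, ← QuotientAddGroup.mk_surjective.range_comp]
    rfl
  have hclosed : IsClosed ((π.comp f).range : Set (H ⧸ N₂)) :=
    hrange ▸ (isCompact_range hlift).isClosed
  rw [sup_comm, ← QuotientAddGroup.comap_map_mk', ← range_comp]
  exact hclosed.preimage continuous_quot_mk

theorem isOpenMap_of_isOpen_range [IsTopologicalAddGroup G] [SigmaCompactSpace G]
    [LocallyCompactSpace H] [T2Space H] {f : G →+ H}
    (hf : Continuous f) (hrange : IsOpen (f.range : Set H)) : IsOpenMap f := by
  have : LocallyCompactSpace f.range := hrange.locallyCompactSpace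
  exact hrange.isOpenMap_subtype_val.comp
    (f.rangeRestrict.isOpenMap_of_sigmaCompact f.rangeRestrict_surjective (hf.subtype_mk _))

end AddMonoidHom

section CutAndProject

variable {d : ℕ} {H₁ H₂ : Type*} [AddCommGroup H₁] [AddCommGroup H₂]

theorem graphHom_le_comap_prodMap_s3 {Γ₁ Γ₂ : AddSubgroup (Euc d)} (hle : Γ₁ ≤ Γ₂)
    {s₁ : Γ₁ →+ H₁} {s₂ : Γ₂ →+ H₂} {θ : H₁ →+ H₂}
    (hcomm : ∀ γ : Γ₁, s₂ (AddSubgroup.inclusion hle γ) = θ (s₁ γ)) :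
    graphHom s₁ ≤ (graphHom s₂).comap (θ.prodMap (AddMonoidHom.id (Euc d))) := by
  rintro _ ⟨γ, rfl⟩
  exact ⟨AddSubgroup.inclusion hle γ, Prod.ext (hcomm γ) rfl⟩

theorem range_sup_range_eq_top_of_isClosed [TopologicalSpace H₂] {Γ : AddSubgroup (Euc d)}
    {s : Γ →+ H₂} (hs : DenseRange s) {θ : H₁ →+ H₂}
    (hD : IsClosed (((θ.prodMap (AddMonoidHom.id (Euc d))).range ⊔ graphHom s :
      AddSubgroup (H₂ × Euc d)) : Set (H₂ × Euc d))) :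
    θ.range ⊔ s.range = ⊤ := by
  set D := (θ.prodMap (AddMonoidHom.id (Euc d))).range ⊔ graphHom s
  have hslice : IsClosed ((D.comap (AddMonoidHom.inl H₂ (Euc d)) : AddSubgroup H₂) : Set H₂) :=
    hD.preimage (continuous_id.prodMk continuous_const)
  have hsD : s.range ≤ D.comap (AddMonoidHom.inl H₂ (Euc d)) := by
    rintro _ ⟨γ, rfl⟩
    have hgraph : ((s γ, (γ : Euc d)) : H₂ × Euc d) ∈ D :=
      AddSubgroup.mem_sup_right ⟨γ, rfl⟩
    have hvert : ((0, (γ : Euc d)) : H₂ × Euc d) ∈ D :=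
      AddSubgroup.mem_sup_left ⟨(0, (γ : Euc d)), by simp⟩
    simpa using D.sub_mem hgraph hvert
  refine eq_top_iff.2 fun h _ ↦ ?_
  have hh : (h, (0 : Euc d)) ∈ D :=
    hslice.closure_subset_iff.2 hsD (hs.closure_range ▸ Set.mem_univ h)
  obtain ⟨_, ⟨⟨a, x⟩, rfl⟩, _, ⟨γ, rfl⟩, hsum⟩ := AddSubgroup.mem_sup.1 hh
  exact AddSubgroup.mem_sup.2 ⟨θ a, ⟨a, rfl⟩, s γ, ⟨γ, rfl⟩, congrArg Prod.fst hsum⟩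

end CutAndProject

theorem cps_morphism_open_and_open_range_general (d : ℕ) (H₁ H₂ : Type*)
    [AddCommGroup H₁] [TopologicalSpace H₁] [IsTopologicalAddGroup H₁]
    [SigmaCompactSpace H₁]
    [AddCommGroup H₂] [TopologicalSpace H₂] [IsTopologicalAddGroup H₂]
    [LocallyCompactSpace H₂] [T2Space H₂]
    (Γ₁ Γ₂ : AddSubgroup (Euc d)) [Countable Γ₂]
    (hle : Γ₁ ≤ Γ₂)
    (s₁ : Γ₁ →+ H₁) (s₂ : Γ₂ →+ H₂)
    (h₁ : IsCPS d H₁ Γ₁ s₁) (h₂ : IsCPS d H₂ Γ₂ s₂)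
    (θ : H₁ →+ H₂) (hθ : Continuous θ)
    (hcomm : ∀ γ : Γ₁, s₂ (AddSubgroup.inclusion hle γ) = θ (s₁ γ)) :
    IsOpenMap θ ∧ IsOpen (θ.range : Set H₂) := by
  have := h₁.cocompactGraph
  have := h₂.discreteGraph
  have hΘ : Continuous (θ.prodMap (AddMonoidHom.id (Euc d))) := by
    rw [AddMonoidHom.coe_prodMap]
    exact hθ.prodMap continuous_id
  have hD := AddMonoidHom.isClosed_range_sup hΘ (graphHom_le_comap_prodMap_s3 hle hcomm)
  have := AddSubgroup.countable_quotient_of_sup_range_eq_top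
    (range_sup_range_eq_top_of_isClosed h₂.denseRange hD)
  have hopen : IsOpen (θ.range : Set H₂) :=
    AddSubgroup.isOpen_of_isSigmaCompact_of_countable_quotient (isSigmaCompact_range hθ)
  exact ⟨θ.isOpenMap_of_isOpen_range hθ hopen, hopen⟩

/-- A continuous group morphism between the internal spaces of two CPS whose
structure groups satisfy `Γ₁ ⊆ Γ₂`, intertwining the `*`-maps on `Γ₁`, is an
open map and has open range. -/
theorem cps_morphism_open_and_open_range (d : ℕ) (H₁ H₂ : Type*)
    [AddCommGroup H₁] [TopologicalSpace H₁] [IsTopologicalAddGroup H₁]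
    [LocallyCompactSpace H₁] [SigmaCompactSpace H₁] [T2Space H₁]
    [AddCommGroup H₂] [TopologicalSpace H₂] [IsTopologicalAddGroup H₂]
    [LocallyCompactSpace H₂] [SigmaCompactSpace H₂] [T2Space H₂]
    (Γ₁ Γ₂ : AddSubgroup (Euc d)) [Countable Γ₁] [Countable Γ₂]
    (hle : Γ₁ ≤ Γ₂)
    (s₁ : Γ₁ →+ H₁) (s₂ : Γ₂ →+ H₂)
    (h₁ : IsCPS d H₁ Γ₁ s₁) (h₂ : IsCPS d H₂ Γ₂ s₂)
    (θ : H₁ →+ H₂) (hθ : Continuous θ)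
    (hcomm : ∀ γ : Γ₁, s₂ (AddSubgroup.inclusion hle γ) = θ (s₁ γ)) :
    IsOpenMap θ ∧ IsOpen (θ.range : Set H₂) :=
  cps_morphism_open_and_open_range_general d H₁ H₂ Γ₁ Γ₂ hle s₁ s₂ h₁ h₂ θ hθ hcomm
end
end

section
/- Let (H₂, Γ₂, s₂) be a cut-and-project scheme on ℝ^d, let Γ be a subgroup of Γ₂, and let D ⊆ Γ be a subset that is relatively dense in ℝ^d and such that the closure of s₂(D) in H₂ is compact. Let H be the closure of s₂(Γ) in H₂ and let s : Γ → H be the restriction of s₂. Then (H, Γ, s) is a cut-and-project scheme; in particular the graph {(s(γ), γ) : γ ∈ Γ} is relatively dense in H × ℝ^d. -/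
open scoped Pointwise

noncomputable section

/-- Relative density of a subset of `ℝ^d`. -/
def RelativelyDense {d : ℕ} (D : Set (Euc d)) : Prop :=
  ∃ R > (0 : ℝ), ∀ x : Euc d, ∃ y ∈ D, dist x y ≤ R

/-- The closure of `s₂(Γ)` in `H₂`, for a subgroup `Γ ≤ Γ₂`. -/
def closureSub {d : ℕ} {H₂ : Type*} [AddCommGroup H₂] [TopologicalSpace H₂]
    [IsTopologicalAddGroup H₂] {Γ Γ₂ : AddSubgroup (Euc d)} (hle : Γ ≤ Γ₂)
    (s₂ : Γ₂ →+ H₂) : AddSubgroup H₂ :=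
  ((s₂.comp (AddSubgroup.inclusion hle)).range).topologicalClosure

/-- The restriction of `s₂` to `Γ`, viewed as a morphism into the closure of
`s₂(Γ)` in `H₂`. -/
def restrictHom {d : ℕ} {H₂ : Type*} [AddCommGroup H₂] [TopologicalSpace H₂]
    [IsTopologicalAddGroup H₂] {Γ Γ₂ : AddSubgroup (Euc d)} (hle : Γ ≤ Γ₂)
    (s₂ : Γ₂ →+ H₂) : Γ →+ closureSub hle s₂ :=
  (s₂.comp (AddSubgroup.inclusion hle)).codRestrict _
    (fun γ => AddSubgroup.le_topologicalClosure _ ⟨γ, rfl⟩)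

open Set

/-!
Density of `s(Γ)` in its closure `H` lets one move any `(h, x) ∈ H × ℝ^d` by a graph point
`(s γ, γ)` so that the first coordinate lands in a fixed compact neighbourhood `V` of `0`.
Correcting the second coordinate by some `δ ∈ D` within distance `R` costs only `s δ` in the
first, which lies in the compact closure `Q` of `s(D)`. Hence the graph plus the compact set
`(V + Q) × B̄(0, R)` is everything, and the quotient is the continuous image of that compact
set. Discreteness is inherited from the graph of `s₂`, which contains the graph of `s`.
-/

theorem AddSubgroup.compactSpace_quotient_of_add_eq_univ {G : Type*} [AddCommGroup G]
    [TopologicalSpace G] {L : AddSubgroup G} {K : Set G} (hK : IsCompact K)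
    (hLK : (L : Set G) + K = univ) : CompactSpace (G ⧸ L) := by
  refine ⟨?_⟩
  convert hK.image (QuotientAddGroup.continuous_mk (N := L))
  refine (eq_univ_of_forall fun q => ?_).symm
  obtain ⟨z, rfl⟩ := QuotientAddGroup.mk_surjective q
  obtain ⟨g, hg, k, hk, rfl⟩ := mem_add.1 (hLK.symm ▸ mem_univ z : z ∈ (L : Set G) + K)
  refine ⟨k, hk, ?_⟩
  rw [QuotientAddGroup.mk_add, (QuotientAddGroup.eq_zero_iff g).2 hg, zero_add]

theorem graphHom_add_eq_univ_of_relativelyDense {d : ℕ} {G : Type*} [AddCommGroup G]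
    [TopologicalSpace G] [IsTopologicalAddGroup G] [WeaklyLocallyCompactSpace G]
    {Γ : AddSubgroup (Euc d)} (s : Γ →+ G) (hs : DenseRange s) {D : Set Γ}
    (hD : RelativelyDense (((↑) : Γ → Euc d) '' D)) {Q : Set G} (hQ : IsCompact Q)
    (hDQ : MapsTo s D Q) :
    ∃ K : Set (G × Euc d), IsCompact K ∧ (graphHom s : Set (G × Euc d)) + K = univ := by
  obtain ⟨R, -, hR⟩ := hD
  obtain ⟨V, hV, hV0⟩ := exists_compact_mem_nhds (0 : G)
  refine ⟨(V + Q) ×ˢ Metric.closedBall 0 R, (hV.add hQ).prod (isCompact_closedBall 0 R),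
    eq_univ_of_forall fun ⟨h, x⟩ => ?_⟩
  have hnhds : {y : G | h - y ∈ V} ∈ nhds h :=
    (continuous_const.sub continuous_id).continuousAt.preimage_mem_nhds (by simpa using hV0)
  obtain ⟨-, hγV, γ, rfl⟩ := mem_closure_iff_nhds.1 (hs h) _ hnhds
  obtain ⟨-, ⟨δ, hδD, rfl⟩, hδR⟩ := hR ((γ : Euc d) - x)
  refine mem_add.2 ⟨(s (γ - δ), ((γ - δ : Γ) : Euc d)), ⟨γ - δ, rfl⟩,
    (h - s γ + s δ, x - ((γ - δ : Γ) : Euc d)), ⟨add_mem_add hγV (hDQ hδD), ?_⟩, ?_⟩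
  · have hshift : -(x - ((γ - δ : Γ) : Euc d)) = (γ : Euc d) - x - δ := by push_cast; abel
    rwa [mem_closedBall_zero_iff, ← norm_neg, hshift, ← dist_eq_norm]
  · ext
    · simp only [Prod.fst_add, map_sub]
      abel
    · exact add_sub_cancel _ _

section Restriction

variable {d : ℕ} {H₂ : Type*} [AddCommGroup H₂] [TopologicalSpace H₂]
  [IsTopologicalAddGroup H₂] {Γ Γ₂ : AddSubgroup (Euc d)} (hle : Γ ≤ Γ₂) (s₂ : Γ₂ →+ H₂)

theorem isClosed_closureSub : IsClosed (closureSub hle s₂ : Set H₂) :=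
  AddSubgroup.isClosed_topologicalClosure _

theorem denseRange_restrictHom : DenseRange (restrictHom hle s₂) := by
  intro x
  rw [closure_subtype, ← range_comp]
  exact x.2

theorem discreteTopology_graphHom_restrictHom [DiscreteTopology (graphHom s₂)] :
    DiscreteTopology (graphHom (restrictHom hle s₂)) := by
  have hemb : Topology.IsEmbedding
      (fun p : graphHom (restrictHom hle s₂) => ((p.1.1 : H₂), p.1.2)) :=
    (Topology.IsEmbedding.subtypeVal.prodMap Topology.IsEmbedding.id).comp
      Topology.IsEmbedding.subtypeVal
  refine (hemb.codRestrict (graphHom s₂ : Set (H₂ × Euc d)) ?_).discreteTopology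
  rintro ⟨-, γ, rfl⟩
  exact ⟨AddSubgroup.inclusion hle γ, rfl⟩

end Restriction

theorem shrunk_structure_group_is_cps_general (d : ℕ) (H₂ : Type*)
    [AddCommGroup H₂] [TopologicalSpace H₂] [IsTopologicalAddGroup H₂]
    [LocallyCompactSpace H₂] [SigmaCompactSpace H₂]
    (Γ₂ : AddSubgroup (Euc d)) (s₂ : Γ₂ →+ H₂)
    (h₂ : IsCPS d H₂ Γ₂ s₂)
    (Γ : AddSubgroup (Euc d)) (hle : Γ ≤ Γ₂)
    (D : Set (Euc d)) (hDΓ : D ⊆ (Γ : Set (Euc d))) (hDdense : RelativelyDense D)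
    (hDcpt : IsCompact (closure (⇑s₂ '' {γ : Γ₂ | (γ : Euc d) ∈ D}))) :
    LocallyCompactSpace (closureSub hle s₂) ∧
    SigmaCompactSpace (closureSub hle s₂) ∧
    IsCPS d (closureSub hle s₂) Γ (restrictHom hle s₂) ∧
    ∃ K : Set (closureSub hle s₂ × Euc d), IsCompact K ∧
      (graphHom (restrictHom hle s₂) : Set (closureSub hle s₂ × Euc d)) + K =
        Set.univ := by
  have hH := isClosed_closureSub hle s₂
  have := hH.isClosedEmbedding_subtypeVal.locallyCompactSpace
  have := h₂.discreteGraph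
  have hDdense' : RelativelyDense (((↑) : Γ → Euc d) '' ((↑) ⁻¹' D)) := by
    rwa [image_preimage_eq_of_subset (by simpa using hDΓ)]
  obtain ⟨K, hK, hcover⟩ := graphHom_add_eq_univ_of_relativelyDense (restrictHom hle s₂)
    (denseRange_restrictHom hle s₂) hDdense'
    (hH.isClosedEmbedding_subtypeVal.isCompact_preimage hDcpt)
    (fun γ hγ => subset_closure ⟨AddSubgroup.inclusion hle γ, hγ, rfl⟩)
  exact ⟨inferInstance, hH.sigmaCompactSpace,
    ⟨denseRange_restrictHom hle s₂, discreteTopology_graphHom_restrictHom hle s₂,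
      AddSubgroup.compactSpace_quotient_of_add_eq_univ hK hcover⟩, K, hK, hcover⟩

/-- Shrinking the structure group of a CPS: if `Γ ≤ Γ₂` contains a subset `D`
relatively dense in `ℝ^d` whose image under `s₂` has compact closure, then
restricting `s₂` to `Γ` and taking the closure `H` of `s₂(Γ)` in `H₂` again
yields a cut-and-project scheme; in particular the graph of the restricted
`*`-map is relatively dense in `H × ℝ^d`. -/
theorem shrunk_structure_group_is_cps (d : ℕ) (H₂ : Type*)
    [AddCommGroup H₂] [TopologicalSpace H₂] [IsTopologicalAddGroup H₂]
    [LocallyCompactSpace H₂] [SigmaCompactSpace H₂] [T2Space H₂]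
    (Γ₂ : AddSubgroup (Euc d)) [Countable Γ₂] (s₂ : Γ₂ →+ H₂)
    (h₂ : IsCPS d H₂ Γ₂ s₂)
    (Γ : AddSubgroup (Euc d)) (hle : Γ ≤ Γ₂)
    (D : Set (Euc d)) (hDΓ : D ⊆ (Γ : Set (Euc d))) (hDdense : RelativelyDense D)
    (hDcpt : IsCompact (closure (⇑s₂ '' {γ : Γ₂ | (γ : Euc d) ∈ D}))) :
    LocallyCompactSpace (closureSub hle s₂) ∧
    SigmaCompactSpace (closureSub hle s₂) ∧
    IsCPS d (closureSub hle s₂) Γ (restrictHom hle s₂) ∧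
    ∃ K : Set (closureSub hle s₂ × Euc d), IsCompact K ∧
      (graphHom (restrictHom hle s₂) : Set (closureSub hle s₂ × Euc d)) + K =
        Set.univ :=
  shrunk_structure_group_is_cps_general d H₂ Γ₂ s₂ h₂ Γ hle D hDΓ hDdense hDcpt
end
end

section
/- Let (H₁, Γ₁, s₁) and (H₂, Γ₂, s₂) be cut-and-project schemes on ℝ^d with Γ₁ ⊆ Γ₂, and suppose there is a continuous group homomorphism θ : H₁ → H₂ with s₂(γ) = θ(s₁(γ)) for all γ ∈ Γ₁. Then the triple (H₁ ⊕_{Γ₁} Γ₂, Γ₂, σ) is a cut-and-project scheme on ℝ^d: σ has dense range in H₁ ⊕_{Γ₁} Γ₂, and the graph {(σ(γ), γ) : γ ∈ Γ₂} is a discrete, relatively dense subgroup of (H₁ ⊕_{Γ₁} Γ₂) × ℝ^d. -/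
open scoped Pointwise

noncomputable section

/-- Type synonym endowing a type with the discrete topology. -/
def Disc (X : Type*) : Type _ := X

instance {X : Type*} [AddCommGroup X] : AddCommGroup (Disc X) := ‹AddCommGroup X›
instance {X : Type*} : TopologicalSpace (Disc X) := ⊥
instance {X : Type*} : DiscreteTopology (Disc X) := ⟨rfl⟩
instance {X : Type*} [AddCommGroup X] : IsTopologicalAddGroup (Disc X) where
  continuous_add := continuous_of_discreteTopology
  continuous_neg := continuous_of_discreteTopology

/-- The identity, as a morphism into the discrete copy. -/
def toDisc (X : Type*) [AddCommGroup X] : X →+ Disc X := AddMonoidHom.id X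

/-- The discrete subgroup `N = {(-s₁(γ), γ) : γ ∈ Γ₁}` of `H₁ × Γ₂`
(`Γ₂` discrete). -/
def NSub {d : ℕ} {H₁ : Type*} [AddCommGroup H₁] [TopologicalSpace H₁]
    {Γ₁ Γ₂ : AddSubgroup (Euc d)} (hle : Γ₁ ≤ Γ₂) (s₁ : Γ₁ →+ H₁) :
    AddSubgroup (H₁ × Disc Γ₂) :=
  ((-s₁).prod ((toDisc Γ₂).comp (AddSubgroup.inclusion hle))).range

/-- The group `H₁ ⊕_{Γ₁} Γ₂ := (H₁ × Γ₂) / N` with the quotient topology. -/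
abbrev DirSum {d : ℕ} {H₁ : Type*} [AddCommGroup H₁] [TopologicalSpace H₁]
    {Γ₁ Γ₂ : AddSubgroup (Euc d)} (hle : Γ₁ ≤ Γ₂) (s₁ : Γ₁ →+ H₁) :=
  (H₁ × Disc Γ₂) ⧸ NSub hle s₁

/-- The morphism `σ : Γ₂ →+ H₁ ⊕_{Γ₁} Γ₂`, `σ(γ) = [(0, γ)]_N`. -/
def sigmaHom {d : ℕ} {H₁ : Type*} [AddCommGroup H₁] [TopologicalSpace H₁]
    {Γ₁ Γ₂ : AddSubgroup (Euc d)} (hle : Γ₁ ≤ Γ₂) (s₁ : Γ₁ →+ H₁) :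
    Γ₂ →+ DirSum hle s₁ :=
  (QuotientAddGroup.mk' (NSub hle s₁)).comp
    ((AddMonoidHom.inr H₁ (Disc Γ₂)).comp (toDisc Γ₂))

/-!
The map `inl : H₁ → H₁ ⊕_{Γ₁} Γ₂`, `h ↦ [(h, 0)]`, is a continuous open homomorphism, every
class is `inl h + σ γ`, and `inl u = σ γ` exactly when `γ ∈ Γ₁` and `u = s₁ γ`. Hence
`inl × id` pulls the graph of `σ` back to the graph of `s₁`, while the graph of `σ` and the
range of `inl × id` together span everything. Density of `s₁`, discreteness of its graph and a
compact set of representatives modulo its graph are therefore carried over to `σ`.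
-/

theorem IsOpenMap.exists_isCompact_image_eq_univ {X Y : Type*} [TopologicalSpace X]
    [TopologicalSpace Y] [WeaklyLocallyCompactSpace X] [CompactSpace Y] {f : X → Y}
    (hf : IsOpenMap f) (hsurj : Function.Surjective f) :
    ∃ K : Set X, IsCompact K ∧ f '' K = Set.univ := by
  choose C hC hCx using fun x : X => exists_compact_mem_nhds x
  obtain ⟨t, ht⟩ := isCompact_univ.elim_finite_subcover (fun x => f '' interior (C x))
    (fun x => hf _ isOpen_interior) fun y _ => by
      obtain ⟨x, rfl⟩ := hsurj y
      exact Set.mem_iUnion.2 ⟨x, Set.mem_image_of_mem f (mem_interior_iff_mem_nhds.2 (hCx x))⟩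
  refine ⟨⋃ x ∈ t, C x, t.isCompact_biUnion fun x _ => hC x, Set.eq_univ_of_univ_subset ?_⟩
  refine ht.trans (Set.iUnion₂_subset fun x hx => Set.image_mono ?_)
  exact interior_subset.trans (Set.subset_biUnion_of_mem (u := C) hx)

theorem AddSubgroup.exists_isCompact_add_eq_univ {G : Type*} [AddCommGroup G]
    [TopologicalSpace G] [IsTopologicalAddGroup G] [WeaklyLocallyCompactSpace G]
    (S : AddSubgroup G) [CompactSpace (G ⧸ S)] : ∃ K : Set G, IsCompact K ∧ (S : Set G) + K = Set.univ := by
  obtain ⟨K, hK, hKS⟩ := QuotientAddGroup.isOpenMap_coe.exists_isCompact_image_eq_univ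
    (QuotientAddGroup.mk_surjective (s := S))
  refine ⟨K, hK, Set.eq_univ_of_forall fun g => ?_⟩
  obtain ⟨k, hk, hkg⟩ : (g : G ⧸ S) ∈ ((↑) : G → G ⧸ S) '' K := hKS ▸ trivial
  exact ⟨g - k, QuotientAddGroup.eq_iff_sub_mem.1 hkg.symm, k, hk, sub_add_cancel g k⟩

theorem AddSubgroup.discreteTopology_of_comap {G G' : Type*} [AddGroup G] [TopologicalSpace G]
    [AddGroup G'] [TopologicalSpace G'] [IsTopologicalAddGroup G'] (f : G →+ G')
    (hf : IsOpenMap f) (S : AddSubgroup G') [DiscreteTopology (S.comap f)] :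
    DiscreteTopology S := by
  obtain ⟨W, hW, hWS⟩ := isOpen_induced_iff.1 (isOpen_discrete ({0} : Set (S.comap f)))
  rw [discreteTopology_iff_isOpen_singleton_zero, isOpen_induced_iff]
  refine ⟨f '' W, hf W hW, Set.eq_singleton_iff_unique_mem.2 ⟨?_, ?_⟩⟩
  · exact ⟨0, by simpa using congrArg (0 ∈ ·) hWS.symm, map_zero f⟩
  · rintro ⟨_, hy⟩ ⟨w, hw, rfl⟩
    have : (⟨w, hy⟩ : S.comap f) ∈ Subtype.val ⁻¹' W := hw
    rw [hWS, Set.mem_singleton_iff] at this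
    simp [show w = 0 from congrArg Subtype.val this]

theorem AddSubgroup.add_image_eq_univ {G G' : Type*} [AddCommGroup G] [AddCommGroup G']
    (f : G →+ G') {A : AddSubgroup G} {B : AddSubgroup G'} (hAB : A.map f ≤ B)
    (hB : (B : Set G') + Set.range f = Set.univ) {K : Set G} (hK : (A : Set G) + K = Set.univ) :
    (B : Set G') + f '' K = Set.univ := by
  refine Set.eq_univ_of_forall fun y => ?_
  obtain ⟨b, hb, _, ⟨g, rfl⟩, rfl⟩ := hB.symm ▸ Set.mem_univ y
  obtain ⟨a, ha, k, hk, rfl⟩ := hK.symm ▸ Set.mem_univ g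
  refine ⟨b + f a, B.add_mem hb (hAB ⟨a, ha, rfl⟩), f k, ⟨k, hk, rfl⟩, ?_⟩
  simp only [map_add, add_assoc]

theorem toDisc_inj {X : Type*} [AddCommGroup X] {a b : X} : toDisc X a = toDisc X b ↔ a = b :=
  Iff.rfl

theorem sigmaHom_apply {d : ℕ} {H₁ : Type*} [AddCommGroup H₁] [TopologicalSpace H₁]
    {Γ₁ Γ₂ : AddSubgroup (Euc d)} (hle : Γ₁ ≤ Γ₂) (s₁ : Γ₁ →+ H₁) (γ : Γ₂) :
    sigmaHom hle s₁ γ = ((0, toDisc Γ₂ γ) : H₁ × Disc Γ₂) :=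
  rfl

namespace DirSum

variable {d : ℕ} {H₁ : Type*} [AddCommGroup H₁] [TopologicalSpace H₁]
  {Γ₁ Γ₂ : AddSubgroup (Euc d)} (hle : Γ₁ ≤ Γ₂) (s₁ : Γ₁ →+ H₁)

def inl : H₁ →+ DirSum hle s₁ :=
  (QuotientAddGroup.mk' (NSub hle s₁)).comp (AddMonoidHom.inl H₁ (Disc Γ₂))

theorem inl_apply (h : H₁) : inl hle s₁ h = ((h, 0) : H₁ × Disc Γ₂) :=
  rfl

theorem exists_inl_add_sigmaHom_eq (x : DirSum hle s₁) :
    ∃ h γ, inl hle s₁ h + sigmaHom hle s₁ γ = x := by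
  obtain ⟨⟨h, γ⟩, rfl⟩ := QuotientAddGroup.mk_surjective x
  refine ⟨h, γ, (QuotientAddGroup.mk_add (N := NSub hle s₁) (h, 0) (0, γ)).symm.trans ?_⟩
  rw [Prod.mk_add_mk, add_zero, zero_add]

theorem inl_eq_sigmaHom_iff {u : H₁} {γ : Γ₂} :
    inl hle s₁ u = sigmaHom hle s₁ γ ↔ ∃ δ : Γ₁, s₁ δ = u ∧ AddSubgroup.inclusion hle δ = γ := by
  rw [inl_apply, sigmaHom_apply, QuotientAddGroup.eq, NSub, AddMonoidHom.mem_range]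
  refine exists_congr fun δ => ?_
  simp [Prod.ext_iff, toDisc_inj]

theorem continuous_inl : Continuous (inl hle s₁) :=
  continuous_quot_mk.comp (continuous_id.prodMk continuous_const)

theorem isOpenMap_inl [IsTopologicalAddGroup H₁] : IsOpenMap (inl hle s₁) :=
  QuotientAddGroup.isOpenMap_coe.comp fun _ hU => Set.prod_singleton ▸ hU.prod (isOpen_discrete _)

theorem denseRange_sigmaHom [IsTopologicalAddGroup H₁] (hs : DenseRange s₁) :
    DenseRange (sigmaHom hle s₁) := by
  intro x
  obtain ⟨h, γ, rfl⟩ := exists_inl_add_sigmaHom_eq hle s₁ x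
  have hcont : Continuous fun u => inl hle s₁ u + sigmaHom hle s₁ γ :=
    (continuous_inl hle s₁).add continuous_const
  refine closure_mono ?_ (hcont.range_subset_closure_image_dense hs ⟨h, rfl⟩)
  rintro _ ⟨_, ⟨δ, rfl⟩, rfl⟩
  refine ⟨AddSubgroup.inclusion hle δ + γ, ?_⟩
  beta_reduce
  rw [map_add, (inl_eq_sigmaHom_iff hle s₁).2 ⟨δ, rfl, rfl⟩]

theorem comap_graphHom_sigmaHom :
    (graphHom (sigmaHom hle s₁)).comap ((inl hle s₁).prodMap (AddMonoidHom.id (Euc d))) =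
      graphHom s₁ := by
  ext ⟨u, x⟩
  simp only [graphHom, AddSubgroup.mem_comap, AddMonoidHom.mem_range, AddMonoidHom.prod_apply,
    AddMonoidHom.coe_prodMap, Prod.map_apply, AddMonoidHom.id_apply, Prod.mk.injEq]
  constructor
  · rintro ⟨γ, hγ, rfl⟩
    obtain ⟨δ, rfl, rfl⟩ := (inl_eq_sigmaHom_iff hle s₁).1 hγ.symm
    exact ⟨δ, rfl, rfl⟩
  · rintro ⟨δ, rfl, rfl⟩
    exact ⟨AddSubgroup.inclusion hle δ, ((inl_eq_sigmaHom_iff hle s₁).2 ⟨δ, rfl, rfl⟩).symm, rfl⟩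

theorem graphHom_sigmaHom_add_range_eq_univ :
    (graphHom (sigmaHom hle s₁) : Set (DirSum hle s₁ × Euc d)) +
      Set.range ((inl hle s₁).prodMap (AddMonoidHom.id (Euc d))) = Set.univ := by
  refine Set.eq_univ_of_forall fun ⟨q, x⟩ => ?_
  obtain ⟨h, γ, rfl⟩ := exists_inl_add_sigmaHom_eq hle s₁ q
  refine ⟨_, ⟨γ, rfl⟩, _, ⟨(h, x - γ), rfl⟩, ?_⟩
  simp [add_comm]

theorem discreteTopology_graphHom_sigmaHom [IsTopologicalAddGroup H₁]
    [DiscreteTopology (graphHom s₁)] : DiscreteTopology (graphHom (sigmaHom hle s₁)) := by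
  have : DiscreteTopology ((graphHom (sigmaHom hle s₁)).comap
      ((inl hle s₁).prodMap (AddMonoidHom.id (Euc d)))) := by
    rwa [comap_graphHom_sigmaHom]
  exact AddSubgroup.discreteTopology_of_comap ((inl hle s₁).prodMap (AddMonoidHom.id (Euc d)))
    ((isOpenMap_inl hle s₁).prodMap IsOpenMap.id) _

theorem exists_isCompact_graphHom_sigmaHom_add_eq_univ [IsTopologicalAddGroup H₁]
    [LocallyCompactSpace H₁] [CompactSpace ((H₁ × Euc d) ⧸ graphHom s₁)] :
    ∃ K : Set (DirSum hle s₁ × Euc d), IsCompact K ∧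
      (graphHom (sigmaHom hle s₁) : Set (DirSum hle s₁ × Euc d)) + K = Set.univ := by
  obtain ⟨K, hK, hKgraph⟩ := (graphHom s₁).exists_isCompact_add_eq_univ
  refine ⟨_, hK.image ((continuous_inl hle s₁).prodMap continuous_id), ?_⟩
  refine AddSubgroup.add_image_eq_univ _ ?_ (graphHom_sigmaHom_add_range_eq_univ hle s₁) hKgraph
  rw [AddSubgroup.map_le_iff_le_comap, comap_graphHom_sigmaHom]

end DirSum

theorem dirsum_is_cps_general (d : ℕ) (H₁ : Type*)
    [AddCommGroup H₁] [TopologicalSpace H₁] [IsTopologicalAddGroup H₁]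
    [LocallyCompactSpace H₁]
    (Γ₁ Γ₂ : AddSubgroup (Euc d))
    (hle : Γ₁ ≤ Γ₂) (s₁ : Γ₁ →+ H₁)
    (h₁ : IsCPS d H₁ Γ₁ s₁) :
    DenseRange (sigmaHom hle s₁) ∧
    DiscreteTopology (graphHom (sigmaHom hle s₁)) ∧
    ∃ K : Set (DirSum hle s₁ × Euc d), IsCompact K ∧
      (graphHom (sigmaHom hle s₁) : Set (DirSum hle s₁ × Euc d)) + K =
        Set.univ := by
  have := h₁.discreteGraph
  have := h₁.cocompactGraph
  exact ⟨DirSum.denseRange_sigmaHom hle s₁ h₁.denseRange,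
    DirSum.discreteTopology_graphHom_sigmaHom hle s₁,
    DirSum.exists_isCompact_graphHom_sigmaHom_add_eq_univ hle s₁⟩

/-- Enlarging the structure group of a CPS: `(H₁ ⊕_{Γ₁} Γ₂, Γ₂, σ)` is again a
cut-and-project scheme: `σ` has dense range, and its graph is a discrete,
relatively dense subgroup of `(H₁ ⊕_{Γ₁} Γ₂) × ℝ^d`. -/
theorem dirsum_is_cps (d : ℕ) (H₁ H₂ : Type*)
    [AddCommGroup H₁] [TopologicalSpace H₁] [IsTopologicalAddGroup H₁]
    [LocallyCompactSpace H₁] [SigmaCompactSpace H₁] [T2Space H₁]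
    [AddCommGroup H₂] [TopologicalSpace H₂] [IsTopologicalAddGroup H₂]
    [LocallyCompactSpace H₂] [SigmaCompactSpace H₂] [T2Space H₂]
    (Γ₁ Γ₂ : AddSubgroup (Euc d)) [Countable Γ₁] [Countable Γ₂]
    (hle : Γ₁ ≤ Γ₂) (s₁ : Γ₁ →+ H₁) (s₂ : Γ₂ →+ H₂)
    (h₁ : IsCPS d H₁ Γ₁ s₁) (h₂ : IsCPS d H₂ Γ₂ s₂)
    (θ : H₁ →+ H₂) (hθ : Continuous θ)
    (hcomm : ∀ γ : Γ₁, s₂ (AddSubgroup.inclusion hle γ) = θ (s₁ γ)) :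
    DenseRange (sigmaHom hle s₁) ∧
    DiscreteTopology (graphHom (sigmaHom hle s₁)) ∧
    ∃ K : Set (DirSum hle s₁ × Euc d), IsCompact K ∧
      (graphHom (sigmaHom hle s₁) : Set (DirSum hle s₁ × Euc d)) + K =
        Set.univ :=
  dirsum_is_cps_general d H₁ Γ₁ Γ₂ hle s₁ h₁
end
end

section
/- Let (H₁, Γ₁, s₁) be a cut-and-project scheme on ℝ^d and Γ₂ a countable subgroup of ℝ^d containing Γ₁. Then the graph {(σ(γ), γ) : γ ∈ Γ₂} is relatively dense in (H₁ ⊕_{Γ₁} Γ₂) × ℝ^d: if K ⊆ H₁ and K' ⊆ ℝ^d are compact sets with G(s₁) + K × K' = H₁ × ℝ^d, then {(σ(γ), γ) : γ ∈ Γ₂} + ([K × {0}]_N × K') = (H₁ ⊕_{Γ₁} Γ₂) × ℝ^d, where [K × {0}]_N denotes the image of K × {0} under the quotient map. -/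
open scoped Pointwise

noncomputable section

/-!
Dividing out by `N` identifies `[(s₁ γ, 0)]` with `σ γ` for `γ ∈ Γ₁`. Given `([(h, γ₂)], x)`,
cover `(h, x - γ₂) = (s₁ γ₁ + k, γ₁ + k')` by `G(s₁) + K × K'`; then
`([(h, γ₂)], x) = (σ (γ₂ + γ₁), γ₂ + γ₁) + ([(k, 0)], k')`.
-/

section DirSum

variable {d : ℕ} {H₁ : Type*} [AddCommGroup H₁] [TopologicalSpace H₁]
  {Γ₁ Γ₂ : AddSubgroup (Euc d)} (hle : Γ₁ ≤ Γ₂) (s₁ : Γ₁ →+ H₁)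

theorem sigmaHom_inclusion (γ : Γ₁) :
    sigmaHom hle s₁ (AddSubgroup.inclusion hle γ) =
      QuotientAddGroup.mk' (NSub hle s₁) (s₁ γ, 0) := by
  rw [sigmaHom, AddMonoidHom.comp_apply, QuotientAddGroup.mk'_eq_mk']
  refine ⟨((-s₁).prod ((toDisc Γ₂).comp (AddSubgroup.inclusion hle))) (-γ), ⟨-γ, rfl⟩, ?_⟩
  ext
  · simp
  · exact add_neg_cancel (AddSubgroup.inclusion hle γ)

theorem mk'_eq_sigmaHom_add_mk' (h : H₁) (γ : Γ₂) :
    QuotientAddGroup.mk' (NSub hle s₁) (h, toDisc Γ₂ γ) =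
      sigmaHom hle s₁ γ + QuotientAddGroup.mk' (NSub hle s₁) (h, 0) := by
  rw [sigmaHom, AddMonoidHom.comp_apply, ← map_add]
  simp

end DirSum

theorem dirsum_graph_relatively_dense_general (d : ℕ) (H₁ : Type*)
    [AddCommGroup H₁] [TopologicalSpace H₁]
    (Γ₁ Γ₂ : AddSubgroup (Euc d))
    (hle : Γ₁ ≤ Γ₂) (s₁ : Γ₁ →+ H₁)
    (K : Set H₁) (K' : Set (Euc d))
    (hcover : (graphHom s₁ : Set (H₁ × Euc d)) + K ×ˢ K' = Set.univ) :
    (graphHom (sigmaHom hle s₁) : Set (DirSum hle s₁ × Euc d)) +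
      ((⇑(QuotientAddGroup.mk' (NSub hle s₁)) ''
        (K ×ˢ ({0} : Set (Disc Γ₂)))) ×ˢ K') = Set.univ := by
  refine Set.eq_univ_of_forall fun ⟨q, x⟩ => ?_
  obtain ⟨⟨h, (γ₂ : Γ₂)⟩, rfl⟩ := QuotientAddGroup.mk'_surjective (NSub hle s₁) q
  have hmem : (h, x - (γ₂ : Euc d)) ∈ (graphHom s₁ : Set (H₁ × Euc d)) + K ×ˢ K' := by
    rw [hcover]; trivial
  obtain ⟨_, ⟨γ₁, rfl⟩, ⟨k, k'⟩, ⟨hk, hk'⟩, hsum⟩ := hmem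
  have hh : s₁ γ₁ + k = h := congrArg Prod.fst hsum
  have hx : (γ₁ : Euc d) + k' = x - γ₂ := congrArg Prod.snd hsum
  refine ⟨(sigmaHom hle s₁ (γ₂ + AddSubgroup.inclusion hle γ₁),
      ↑(γ₂ + AddSubgroup.inclusion hle γ₁)), ⟨_, rfl⟩,
    (QuotientAddGroup.mk' (NSub hle s₁) (k, 0), k'), ⟨Set.mem_image_of_mem _ ⟨hk, rfl⟩, hk'⟩,
    Prod.ext ?_ ?_⟩
  · have hsplit : QuotientAddGroup.mk' (NSub hle s₁) (h, 0) =
        sigmaHom hle s₁ (AddSubgroup.inclusion hle γ₁) +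
          QuotientAddGroup.mk' (NSub hle s₁) (k, 0) := by
      rw [sigmaHom_inclusion, ← map_add, ← hh]
      simp
    change _ + _ = QuotientAddGroup.mk' (NSub hle s₁) (h, toDisc Γ₂ γ₂)
    rw [mk'_eq_sigmaHom_add_mk', hsplit, map_add, add_assoc]
  · change (γ₂ : Euc d) + γ₁ + k' = x
    rw [add_assoc, hx]
    simp

/-- The graph of `σ : Γ₂ →+ H₁ ⊕_{Γ₁} Γ₂` is relatively dense: if compact sets
`K ⊆ H₁`, `K' ⊆ ℝ^d` satisfy `G(s₁) + K × K' = H₁ × ℝ^d`, then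
`G(σ) + [K × {0}]_N × K' = (H₁ ⊕_{Γ₁} Γ₂) × ℝ^d`. -/
theorem dirsum_graph_relatively_dense (d : ℕ) (H₁ : Type*)
    [AddCommGroup H₁] [TopologicalSpace H₁] [IsTopologicalAddGroup H₁]
    [LocallyCompactSpace H₁] [SigmaCompactSpace H₁] [T2Space H₁]
    (Γ₁ Γ₂ : AddSubgroup (Euc d)) [Countable Γ₁] [Countable Γ₂]
    (hle : Γ₁ ≤ Γ₂) (s₁ : Γ₁ →+ H₁) (h₁ : IsCPS d H₁ Γ₁ s₁)
    (K : Set H₁) (K' : Set (Euc d)) (hK : IsCompact K) (hK' : IsCompact K')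
    (hcover : (graphHom s₁ : Set (H₁ × Euc d)) + K ×ˢ K' = Set.univ) :
    (graphHom (sigmaHom hle s₁) : Set (DirSum hle s₁ × Euc d)) +
      ((⇑(QuotientAddGroup.mk' (NSub hle s₁)) ''
        (K ×ˢ ({0} : Set (Disc Γ₂)))) ×ˢ K') = Set.univ :=
  dirsum_graph_relatively_dense_general d H₁ Γ₁ Γ₂ hle s₁ K K' hcover
end
end

section
/- Let (H, Γ, s) be a cut-and-project scheme on ℝ^d, let R be a compact subgroup of H, and let π : H → H/R be the quotient homomorphism. Then (H/R, Γ, π ∘ s) is a cut-and-project scheme on ℝ^d: H/R is a locally compact, σ-compact, Hausdorff abelian topological group, π ∘ s has dense range in H/R, and the graph {((π ∘ s)(γ), γ) : γ ∈ Γ} is a discrete and cocompact subgroup of (H/R) × ℝ^d. -/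
/-!
The quotient map `H → H/R` by a compact subgroup is proper, hence so is
`φ = π × id : H × ℝ^d → H/R × ℝ^d`, and the new graph is the image of the old one under `φ`.
A closed homomorphism that is injective on a discrete subgroup `Λ` maps
`Λ ∖ {0}` to a closed set missing `0`, so `φ(Λ)` is again discrete; injectivity on the graph
holds because a graph point is determined by its `ℝ^d`-coordinate. Cocompactness and
density pass to images under continuous surjections.
-/

open scoped Pointwise

noncomputable section

open Set Topology

theorem Function.Surjective.sigmaCompactSpace {X Y : Type*} [TopologicalSpace X]
    [TopologicalSpace Y] [SigmaCompactSpace X] {f : X → Y} (hf : Continuous f)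
    (hsurj : Function.Surjective f) : SigmaCompactSpace Y :=
  isSigmaCompact_univ_iff.mp (hsurj.range_eq ▸ isSigmaCompact_range hf)

theorem QuotientAddGroup.isProperMap_mk {G : Type*} [AddGroup G] [TopologicalSpace G]
    [IsTopologicalAddGroup G] {K : AddSubgroup G} (hK : IsCompact (K : Set G)) :
    IsProperMap (QuotientAddGroup.mk : G → G ⧸ K) := by
  refine isProperMap_iff_isClosedMap_and_compact_fibers.mpr
    ⟨continuous_quot_mk, isClosedMap_coe hK, fun y ↦ ?_⟩
  obtain ⟨x, rfl⟩ := QuotientAddGroup.mk_surjective y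
  rw [← image_singleton, preimage_image_mk_eq_add]
  exact isCompact_singleton.add hK

theorem AddSubgroup.discreteTopology_map_of_isClosedMap {G G' : Type*} [AddGroup G]
    [TopologicalSpace G] [IsTopologicalAddGroup G] [T2Space G] [AddGroup G']
    [TopologicalSpace G'] [IsTopologicalAddGroup G'] {Λ : AddSubgroup G} [DiscreteTopology Λ]
    {φ : G →+ G'} (hφ : IsClosedMap φ) (hker : Disjoint Λ φ.ker) :
    DiscreteTopology (Λ.map φ) := by
  set A : Set G := Subtype.val '' ({0}ᶜ : Set Λ)
  have hA : IsClosed A :=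
    AddSubgroup.isClosed_of_discrete.isClosedEmbedding_subtypeVal.isClosedMap _
      (isClosed_discrete _)
  have hzero : ({0} : Set (Λ.map φ)) = Subtype.val ⁻¹' (φ '' A)ᶜ := by
    ext ⟨y, hy⟩
    obtain ⟨x, hx, rfl⟩ := AddSubgroup.mem_map.mp hy
    rw [mem_singleton_iff, AddSubgroup.mk_eq_zero, mem_preimage, mem_compl_iff]
    constructor
    · rintro hφx ⟨_, ⟨⟨x', hx'⟩, hx'0, rfl⟩, hφx'⟩
      exact hx'0 (Subtype.ext (AddSubgroup.disjoint_def.mp hker hx' (hφx'.trans hφx)))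
    · intro hnot
      by_contra hφx
      have hx0 : (⟨x, hx⟩ : Λ) ≠ 0 := fun h ↦
        hφx (by rw [show x = 0 from congrArg Subtype.val h, map_zero])
      exact hnot ⟨x, ⟨⟨x, hx⟩, hx0, rfl⟩, rfl⟩
  exact discreteTopology_of_isOpen_singleton_zero
    (hzero ▸ (hφ _ hA).isOpen_compl.preimage continuous_subtype_val)

theorem QuotientAddGroup.compactSpace_quotient_map {G G' : Type*} [AddCommGroup G]
    [TopologicalSpace G] [AddCommGroup G'] [TopologicalSpace G'] {Λ : AddSubgroup G}
    [CompactSpace (G ⧸ Λ)] {φ : G →+ G'} (hφ : Continuous φ) (hsurj : Function.Surjective φ) :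
    CompactSpace (G' ⧸ Λ.map φ) := by
  let f := QuotientAddGroup.map Λ (Λ.map φ) φ (AddSubgroup.le_comap_map φ Λ)
  have hf : Continuous f :=
    (QuotientAddGroup.isQuotientMap_mk Λ).continuous_iff.mpr (continuous_quot_mk.comp hφ)
  exact (QuotientAddGroup.map_surjective_of_surjective Λ (Λ.map φ) φ
    (QuotientAddGroup.mk_surjective.comp hsurj) _).compactSpace hf

section graphHom

variable {d : ℕ} {H H' : Type*} [AddCommGroup H] [AddCommGroup H'] {Γ : AddSubgroup (Euc d)}

theorem graphHom_comp (s : Γ →+ H) (f : H →+ H') :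
    graphHom (f.comp s) = (graphHom s).map (f.prodMap (AddMonoidHom.id (Euc d))) := by
  rw [graphHom, graphHom, ← AddMonoidHom.range_comp]
  rfl

theorem disjoint_graphHom_ker_prodMap_id (s : Γ →+ H) (f : H →+ H') :
    Disjoint (graphHom s) (f.prodMap (AddMonoidHom.id (Euc d))).ker := by
  rw [AddSubgroup.disjoint_def]
  rintro _ ⟨γ, rfl⟩ hγ
  obtain rfl : γ = 0 := Subtype.ext (congrArg Prod.snd hγ)
  exact map_zero _

end graphHom

theorem quotient_by_compact_subgroup_is_cps_general (d : ℕ) (H : Type*)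
    [AddCommGroup H] [TopologicalSpace H] [IsTopologicalAddGroup H]
    [LocallyCompactSpace H] [SigmaCompactSpace H] [T2Space H]
    (Γ : AddSubgroup (Euc d)) (s : Γ →+ H)
    (hCPS : IsCPS d H Γ s)
    (R : AddSubgroup H) (hR : IsCompact (R : Set H)) :
    LocallyCompactSpace (H ⧸ R) ∧ SigmaCompactSpace (H ⧸ R) ∧
    T2Space (H ⧸ R) ∧
    IsCPS d (H ⧸ R) Γ ((QuotientAddGroup.mk' R).comp s) := by
  have : IsClosed (R : Set H) := hR.isClosed
  have := hCPS.discreteGraph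
  have := hCPS.cocompactGraph
  have hφ : IsProperMap ((QuotientAddGroup.mk' R).prodMap (AddMonoidHom.id (Euc d))) :=
    (QuotientAddGroup.isProperMap_mk hR).prodMap isProperMap_id
  refine ⟨inferInstance, QuotientAddGroup.mk_surjective.sigmaCompactSpace continuous_quot_mk,
    inferInstance, ⟨?_, ?_, ?_⟩⟩
  · exact QuotientAddGroup.mk_surjective.denseRange.comp hCPS.denseRange continuous_quot_mk
  · rw [graphHom_comp]
    exact AddSubgroup.discreteTopology_map_of_isClosedMap hφ.isClosedMap
      (disjoint_graphHom_ker_prodMap_id s _)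
  · rw [graphHom_comp]
    exact QuotientAddGroup.compactSpace_quotient_map hφ.continuous
      (QuotientAddGroup.mk_surjective.prodMap Function.surjective_id)

/-- Modding out a compact subgroup `R` of the internal space of a CPS yields
again a CPS: `H/R` is a locally compact, σ-compact Hausdorff abelian
topological group, `π ∘ s` has dense range, and its graph is a discrete and
cocompact subgroup of `(H/R) × ℝ^d`. -/
theorem quotient_by_compact_subgroup_is_cps (d : ℕ) (H : Type*)
    [AddCommGroup H] [TopologicalSpace H] [IsTopologicalAddGroup H]
    [LocallyCompactSpace H] [SigmaCompactSpace H] [T2Space H]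
    (Γ : AddSubgroup (Euc d)) [Countable Γ] (s : Γ →+ H)
    (hCPS : IsCPS d H Γ s)
    (R : AddSubgroup H) (hR : IsCompact (R : Set H)) :
    LocallyCompactSpace (H ⧸ R) ∧ SigmaCompactSpace (H ⧸ R) ∧
    T2Space (H ⧸ R) ∧
    IsCPS d (H ⧸ R) Γ ((QuotientAddGroup.mk' R).comp s) :=
  quotient_by_compact_subgroup_is_cps_general d H Γ s hCPS R hR
end
end

section
/- Let H be a Hausdorff abelian topological group and (Vᵢ)_{i∈I} a nonempty family of nonempty compact subsets of H that is irredundant, i.e. the only w ∈ H with Vᵢ + w = Vᵢ for all i ∈ I is w = 0. Suppose (Aᵢ)_{i∈I} is a family of subsets of H and w, w' ∈ H satisfy Aᵢ ⊆ Vᵢ + w and Vᵢ ⊆ Aᵢ + w' for all i ∈ I. Then w' = −w and Aᵢ = Vᵢ + w for all i ∈ I. -/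
/-!
Chaining the two inclusions gives `Vᵢ ⊆ Vᵢ + (w + w')`. A closed compact set is never strictly
contained in a translate of itself: if `x + s ∈ K` for all `x ∈ K`, the orbit `x + n • s`
(`n ≥ 0`) stays in `K`, and, as in a compact group, every `x + m • s` with `m : ℤ` is a cluster
point of that orbit, so `x - s ∈ closure K = K`. Hence `w + w'` is a period of every `Vᵢ`, and
irredundancy forces `w + w' = 0`.
-/

open scoped Pointwise
open Filter Set Topology

namespace Set

variable {G : Type*} [AddCommGroup G]

theorem mem_add_singleton_iff {K : Set G} {x t : G} : x ∈ K + {t} ↔ x - t ∈ K := by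
  rw [add_singleton, image_add_right, mem_preimage, sub_eq_add_neg]

end Set

section

variable {G : Type*} [AddCommGroup G] [TopologicalSpace G] [IsTopologicalAddGroup G]

theorem IsCompact.mapClusterPt_add_zsmul {K : Set G} (hK : IsCompact K) {x s : G}
    (hx : ∃ᶠ n : ℤ in atTop, x + n • s ∈ K) (m : ℤ) :
    MapClusterPt (x + m • s) atTop fun n : ℤ ↦ x + n • s := by
  obtain ⟨y, -, hy⟩ := hK.exists_mapClusterPt_of_frequently hx
  have hcont : ContinuousAt (fun p : G × G ↦ x + m • s + p.2 - p.1) (y, y) := by fun_prop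
  refine MapClusterPt.of_comp (φ := ↿fun a b : ℤ ↦ m + b - a) (p := atTop.curry atTop)
    (Tendsto.curry <| .of_forall fun a ↦
      tendsto_atTop_atTop.2 fun c ↦ ⟨c - m + a, fun b hb ↦ by omega⟩) ?_
  convert (hy.curry_prodMap hy).continuousAt_comp hcont using 2
  · simp
  · ext ⟨a, b⟩
    simp only [Function.comp_apply, Prod.map, Function.HasUncurry.uncurry, id, add_zsmul,
      sub_zsmul]
    abel

theorem IsCompact.sub_mem_of_add_mem {K : Set G} (hK : IsCompact K) (hKc : IsClosed K) {s : G}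
    (hs : ∀ x ∈ K, x + s ∈ K) {x : G} (hx : x ∈ K) : x - s ∈ K := by
  have horbit : ∀ n : ℕ, x + n • s ∈ K := by
    intro n
    induction n with
    | zero => simpa using hx
    | succ n ih => simpa [succ_nsmul, add_assoc] using hs _ ih
  have hfreq : ∀ᶠ n : ℤ in atTop, x + n • s ∈ K :=
    (eventually_ge_atTop 0).mono fun n hn ↦ by
      lift n to ℕ using hn
      simpa using horbit n
  simpa [sub_eq_add_neg] using
    hKc.mem_of_mapClusterPt (hK.mapClusterPt_add_zsmul hfreq.frequently (-1)) hfreq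

theorem IsCompact.add_singleton_eq_of_subset {K : Set G} (hK : IsCompact K) (hKc : IsClosed K)
    {t : G} (h : K ⊆ K + {t}) : K + {t} = K := by
  have hsub : ∀ x ∈ K, x + -t ∈ K := fun x hx ↦ by
    simpa [sub_eq_add_neg] using mem_add_singleton_iff.mp (h hx)
  refine Subset.antisymm (fun x hx ↦ ?_) h
  simpa using hK.sub_mem_of_add_mem hKc hsub (mem_add_singleton_iff.mp hx)

end

theorem irredundant_translate_rigidity_general (H : Type*) [AddCommGroup H]
    [TopologicalSpace H] [IsTopologicalAddGroup H] [T2Space H]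
    (I : Type*) (V A : I → Set H)
    (hcpt : ∀ i, IsCompact (V i))
    (hirr : ∀ w : H, (∀ i, V i + ({w} : Set H) = V i) → w = 0)
    (w w' : H)
    (hA : ∀ i, A i ⊆ V i + ({w} : Set H))
    (hV : ∀ i, V i ⊆ A i + ({w'} : Set H)) :
    w' = -w ∧ ∀ i, A i = V i + ({w} : Set H) := by
  have hperiod : ∀ i, V i + {w + w'} = V i := fun i ↦
    (hcpt i).add_singleton_eq_of_subset (hcpt i).isClosed <| calc
      V i ⊆ A i + {w'} := hV i
      _ ⊆ V i + {w} + {w'} := add_subset_add_right (hA i)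
      _ = V i + {w + w'} := by rw [add_assoc, singleton_add_singleton]
  have hw' : w' = -w := eq_neg_of_add_eq_zero_right (hirr _ hperiod)
  refine ⟨hw', fun i ↦ (hA i).antisymm ?_⟩
  calc V i + {w} ⊆ A i + {w'} + {w} := add_subset_add_right (hV i)
    _ = A i := by rw [add_assoc, singleton_add_singleton, hw', neg_add_cancel, singleton_zero,
      add_zero]

/-- Rigidity for irredundant families of compact sets: if `(Vᵢ)` is an
irredundant nonempty family of nonempty compact subsets of a Hausdorff abelian
topological group, and `Aᵢ ⊆ Vᵢ + w`, `Vᵢ ⊆ Aᵢ + w'` for all `i`, then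
`w' = -w` and `Aᵢ = Vᵢ + w` for all `i`. -/
theorem irredundant_translate_rigidity (H : Type*) [AddCommGroup H]
    [TopologicalSpace H] [IsTopologicalAddGroup H] [T2Space H]
    (I : Type*) [Nonempty I] (V A : I → Set H)
    (hne : ∀ i, (V i).Nonempty) (hcpt : ∀ i, IsCompact (V i))
    (hirr : ∀ w : H, (∀ i, V i + ({w} : Set H) = V i) → w = 0)
    (w w' : H)
    (hA : ∀ i, A i ⊆ V i + ({w} : Set H))
    (hV : ∀ i, V i ⊆ A i + ({w'} : Set H)) :
    w' = -w ∧ ∀ i, A i = V i + ({w} : Set H) :=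
  irredundant_translate_rigidity_general H I V A hcpt hirr w w' hA hV
end

section
/- Let H be a Hausdorff abelian topological group, V a nonempty compact subset of H, and g ∈ H. If V ⊆ V + g, then V = V + g. -/
open scoped Pointwise
open Filter Set Topology

/-!
It suffices to show that a compact set `K` with `K + x ⊆ K` satisfies `K - x ⊆ K` (apply it with
`x = -g`). For `v ∈ K` the orbit `u n = v + n • x` stays in `K`, so it has a cluster point `p`.
Two terms `u m`, `u n` with `m < n` close to `p` make `(n - m) • x = -u m + u n` close to `0`, so
`0` is a limit of positive multiples of `x`. Hence `v - x` is a limit of the points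
`v - x + (k + 1) • x = u k ∈ K`, and `v - x ∈ K` because `K` is closed.
-/

section

variable {G : Type*} [AddGroup G] [TopologicalSpace G] [IsTopologicalAddGroup G]

theorem zero_mem_closure_range_succ_nsmul_of_mapClusterPt {a x p : G}
    (hp : MapClusterPt p atTop fun n : ℕ => a + n • x) :
    (0 : G) ∈ closure (range fun k : ℕ => (k + 1) • x) := by
  rw [mem_closure_iff_nhds]
  intro U hU
  have hdiff : ∀ᶠ q in 𝓝 p ×ˢ 𝓝 p, -q.1 + q.2 ∈ U := by
    have ht : Tendsto (fun q : G × G => -q.1 + q.2) (𝓝 (p, p)) (𝓝 0) := by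
      simpa using (by fun_prop : Continuous fun q : G × G => -q.1 + q.2).tendsto (p, p)
    rw [← nhds_prod_eq]
    exact ht hU
  obtain ⟨N, hN, hNU⟩ := (eventually_prod_self_iff (r := fun y z => -y + z ∈ U)).1 hdiff
  have hfreq := mapClusterPt_iff_frequently.1 hp N hN
  obtain ⟨m, -, hm⟩ := frequently_atTop.1 hfreq 0
  obtain ⟨n, hmn, hn⟩ := frequently_atTop.1 hfreq (m + 1)
  obtain ⟨k, rfl⟩ := Nat.exists_eq_add_of_le hmn
  refine ⟨(k + 1) • x, ?_, k, rfl⟩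
  simpa [add_assoc, add_comm 1 k, add_nsmul] using hNU _ hm _ hn

theorem IsCompact.mapsTo_add_neg_of_mapsTo_add [T2Space G] {K : Set G} (hK : IsCompact K)
    {x : G} (h : MapsTo (· + x) K K) : MapsTo (· + -x) K K := by
  intro v hv
  have horbit : ∀ n : ℕ, v + n • x ∈ K := fun n => by
    simpa only [add_right_iterate] using h.iterate n hv
  obtain ⟨p, -, hp⟩ := hK.exists_clusterPt (f := map (fun n : ℕ => v + n • x) atTop)
    (le_principal_iff.2 (mem_map.2 (Eventually.of_forall horbit)))
  rw [← hK.isClosed.closure_eq]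
  simpa using map_mem_closure (continuous_const_add (v + -x))
    (zero_mem_closure_range_succ_nsmul_of_mapClusterPt hp)
    (forall_mem_range.2 fun k => by simpa [succ_nsmul', add_assoc] using horbit k)

end

theorem compact_subset_translate_eq_general (H : Type*) [AddCommGroup H]
    [TopologicalSpace H] [IsTopologicalAddGroup H] [T2Space H]
    (V : Set H) (hcpt : IsCompact V) (g : H)
    (h : V ⊆ V + ({g} : Set H)) : V = V + ({g} : Set H) := by
  rw [add_singleton] at h ⊢
  have hback : MapsTo (· + -g) V V := by
    rintro _ hv
    obtain ⟨w, hw, rfl⟩ := h hv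
    simpa using hw
  have hforth := hcpt.mapsTo_add_neg_of_mapsTo_add hback
  rw [neg_neg] at hforth
  exact h.antisymm hforth.image_subset

/-- A nonempty compact subset of a Hausdorff abelian topological group that is
contained in one of its translates equals that translate. -/
theorem compact_subset_translate_eq (H : Type*) [AddCommGroup H]
    [TopologicalSpace H] [IsTopologicalAddGroup H] [T2Space H]
    (V : Set H) (hne : V.Nonempty) (hcpt : IsCompact V) (g : H)
    (h : V ⊆ V + ({g} : Set H)) : V = V + ({g} : Set H) :=
  compact_subset_translate_eq_general H V hcpt g h
end

section
/- Let X and Y be topological spaces with Y Hausdorff, let f : X → Y be a continuous open map, and let W ⊆ X be a compact set that is topologically regular, i.e. W equals the closure of its interior. Then f(W) is a compact topologically regular subset of Y, i.e. f(W) equals the closure of its interior in Y. -/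
open Set

theorem IsOpenMap.image_closure_interior_subset {X Y : Type*} [TopologicalSpace X]
    [TopologicalSpace Y] {f : X → Y} (hfo : IsOpenMap f) (hfc : Continuous f) (s : Set X) :
    f '' closure (interior s) ⊆ closure (interior (f '' s)) :=
  calc f '' closure (interior s) ⊆ closure (f '' interior s) :=
        image_closure_subset_closure_image hfc
    _ ⊆ closure (interior (f '' s)) := closure_mono (hfo.image_interior_subset s)

/-- The image of a compact topologically regular set under a continuous open
map into a Hausdorff space is compact and topologically regular. -/
theorem image_compact_topologically_regular (X Y : Type*)
    [TopologicalSpace X] [TopologicalSpace Y] [T2Space Y]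
    (f : X → Y) (hfc : Continuous f) (hfo : IsOpenMap f)
    (W : Set X) (hcpt : IsCompact W) (hreg : W = closure (interior W)) :
    IsCompact (f '' W) ∧ f '' W = closure (interior (f '' W)) := by
  have hcpt' : IsCompact (f '' W) := hcpt.image hfc
  refine ⟨hcpt', Subset.antisymm ?_ hcpt'.isClosed.closure_interior_subset⟩
  calc f '' W = f '' closure (interior W) := by rw [← hreg]
    _ ⊆ closure (interior (f '' W)) := hfo.image_closure_interior_subset hfc W
end
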